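/- Let Kₙ be the complete graph, r_BN its Baker-Norine rank, and 𝒜 = {a ∈ ℤ^n : a₁,…,a_{n-2} ∈ {0,…,n-1}, a_{n-1}=0}. For a ∈ 𝒜 with deg(a) = i: a₁+⋯+a_{n-2} ≤ i if and only if r_BN(a) = r_BN(a - e_{n-1}) + 1. -/

import Mathlib

open scoped BigOperators

/-- degree of a divisor -/
def deg {n : ℕ} (d : Fin n → ℤ) : ℤ := ∑ i, d i

/-- initially zero: vanishes for all sufficiently small degree -/
def InitiallyZero {n : ℕ} (f : (Fin n → ℤ) → ℤ) : Prop :=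
  ∃ a : ℤ, ∀ d, deg d ≤ a → f d = 0

/-- indicator vector of a finite set of coordinates -/
def eI {n : ℕ} (I : Finset (Fin n)) : Fin n → ℤ := fun i => if i ∈ I then 1 else 0

/-- standard basis vector -/
def stdB {n : ℕ} (i : Fin n) : Fin n → ℤ := fun j => if j = i then 1 else 0

/-- the Möbius operator 𝔪 -/
def mob {n : ℕ} (f : (Fin n → ℤ) → ℤ) : (Fin n → ℤ) → ℤ :=
  fun d => ∑ I : Finset (Fin n), (-1) ^ I.card * f (d - eI I)

/-- a modular function -/
def Modular {n : ℕ} (h : (Fin n → ℤ) → ℤ) : Prop := ∀ d, mob h d = 0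

/-- L¹ distance (as a natural number) from `d` to the set `N` -/
noncomputable def distTo {n : ℕ} (N : Set (Fin n → ℤ)) (d : Fin n → ℤ) : ℕ :=
  sInf {k : ℕ | ∃ d' ∈ N, ∑ i, (d i - d' i).natAbs = k}

/-- equivalence modulo the image of the Laplacian of the complete graph Kₙ:
the Laplacian sends `x` to `fun i => n * x i - ∑ j, x j`. -/
def lapEquiv (n : ℕ) (d d' : Fin n → ℤ) : Prop :=
  ∃ x : Fin n → ℤ, ∀ i, d i - d' i = (n : ℤ) * x i - ∑ j, x j

/-- divisors of Kₙ not equivalent to an effective divisor -/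
def NKn (n : ℕ) : Set (Fin n → ℤ) :=
  {d | ¬ ∃ d' : Fin n → ℤ, (∀ i, 0 ≤ d' i) ∧ lapEquiv n d d'}

/-- the Baker–Norine rank of the complete graph Kₙ -/
noncomputable def rBN (n : ℕ) (d : Fin n → ℤ) : ℤ :=
  (distTo (NKn n) d : ℤ) - 1

/-!
A divisor `d` of `Kₙ` is not equivalent to an effective divisor iff
`deg d < ∑ᵢ ((dᵢ - c) mod n)` for every `c ∈ ℤ`: the Laplacian can replace `d - c` by its
coordinatewise residues mod `n` plus a constant. So the set `N` of such divisors is a lower set,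
closed under residue-preserving exchanges of coordinates, and the distance from `d` to `N` is
`deg d - M(d)` with `M(d) = max {deg p | p ∈ N, p ≤ d}`. With `e = e_{n-1}` (1-based, as in the
statement, i.e. `stdB ⟨n - 2, _⟩`) we have `M(a - e) ≤ M(a) ≤ M(a - e) + 1`, and the
claim is that `M(a) = M(a - e)` exactly when `aₙ ≥ 0`.
If `aₙ ≥ 0` then `a` is effective, so any `p ≤ a` in `N` has a negative coordinate, which can be
swapped into position `n-1` to get below `a - e`. If `aₙ < 0`, the slack of `a - e` at `c = 0`
exceeds `n`; residue-preserving exchanges push coordinate `n-1` of a maximal `p ≤ a - e` up to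
`-1`, where it can be raised by one, so `M(a) > M(a - e)`.
-/

namespace BakerNorine

variable {n : ℕ}

lemma deg_add (d d' : Fin n → ℤ) : deg (d + d') = deg d + deg d' := Finset.sum_add_distrib

lemma deg_sub (d d' : Fin n → ℤ) : deg (d - d') = deg d - deg d' := Finset.sum_sub_distrib ..

lemma deg_stdB (i : Fin n) : deg (stdB i) = 1 := by simp [deg, stdB]

lemma deg_comp_perm (d : Fin n → ℤ) (σ : Equiv.Perm (Fin n)) : deg (d ∘ σ) = deg d :=
  Equiv.sum_comp σ d

lemma stdB_nonneg (i : Fin n) : 0 ≤ stdB i := fun j => by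
  unfold stdB; split_ifs <;> simp

lemma deg_eq_of_lapEquiv {d d' : Fin n → ℤ} (h : lapEquiv n d d') : deg d = deg d' := by
  obtain ⟨x, hx⟩ := h
  have : deg (d - d') = 0 := by
    simp only [deg, Pi.sub_apply, hx, Finset.sum_sub_distrib, ← Finset.mul_sum, Finset.sum_const,
      Finset.card_univ, Fintype.card_fin, nsmul_eq_mul, sub_self]
  linarith [deg_sub d d']

lemma isLowerSet_NKn : IsLowerSet (NKn n) := by
  rintro p q hqp hp ⟨d', hd', x, hx⟩
  refine hp ⟨d' + (p - q), fun i => ?_, x, fun i => ?_⟩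
  · simpa using add_nonneg (hd' i) (sub_nonneg.2 (hqp i))
  · simp only [Pi.add_apply, Pi.sub_apply, ← hx i]; ring

lemma mem_NKn_of_deg_neg {d : Fin n → ℤ} (hd : deg d < 0) : d ∈ NKn n := by
  rintro ⟨d', hd', h⟩
  have : 0 ≤ deg d' := Finset.sum_nonneg fun i _ => hd' i
  linarith [deg_eq_of_lapEquiv h]

lemma NKn_nonempty (hn : 0 < n) : (NKn n).Nonempty :=
  ⟨fun _ => -1, mem_NKn_of_deg_neg (by simpa [deg] using hn)⟩

lemma exists_neg_of_mem_NKn {d : Fin n → ℤ} (hd : d ∈ NKn n) : ∃ i, d i < 0 := by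
  by_contra! h
  exact hd ⟨d, h, 0, fun i => by simp⟩

lemma emod_le_self_of_nonneg {x : ℤ} (m : ℕ) (hx : 0 ≤ x) : x % (m : ℤ) ≤ x := by
  have : 0 ≤ (m : ℤ) * (x / m) :=
    mul_nonneg (by positivity) (Int.ediv_nonneg hx (by positivity))
  linarith [Int.emod_def x m]

lemma add_one_emod_sub_emod {m : ℤ} (hm : 1 < m) (y : ℤ) :
    (y + 1) % m - y % m = if m ∣ y + 1 then 1 - m else 1 := by
  have hlt := Int.emod_lt_of_pos y (by omega : 0 < m)
  have hnonneg := Int.emod_nonneg y (by omega : m ≠ 0)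
  split_ifs with h
  · have := (Int.le_emod_self_add_one_iff (by omega)).2 h
    rw [Int.emod_eq_zero_of_dvd h]
    omega
  · have := mt (Int.le_emod_self_add_one_iff (by omega)).1 h
    rw [← Int.emod_add_emod, Int.emod_eq_of_lt (by omega) (by omega)]
    ring

def slack (n : ℕ) (d : Fin n → ℤ) (c : ℤ) : ℤ := ∑ i, (d i - c) % (n : ℤ) - deg d

lemma slack_eq_sum (d : Fin n → ℤ) (c : ℤ) :
    slack n d c = ∑ i, ((d i - c) % (n : ℤ) - d i) := by
  rw [slack, deg, Finset.sum_sub_distrib]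

lemma exists_effective_lapEquiv (hn : 0 < n) {d : Fin n → ℤ} {c : ℤ} (h : slack n d c ≤ 0) :
    ∃ d' : Fin n → ℤ, (∀ i, 0 ≤ d' i) ∧ lapEquiv n d d' := by
  -- the Laplacian of the quotients of `d - c` by `n` moves `d` to its residues plus a constant
  set x : Fin n → ℤ := fun i => (d i - c) / n
  have hx : ∀ i, d i - n * x i = c + (d i - c) % n := fun i => by rw [Int.emod_def]; ring
  have hsum : -c ≤ ∑ j, x j := by
    have hnx : (n : ℤ) * ∑ j, x j = ∑ j, (d j - c - (d j - c) % n) := by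
      rw [Finset.mul_sum]
      exact Finset.sum_congr rfl fun j _ => by linarith [hx j]
    simp only [Finset.sum_sub_distrib, Finset.sum_const, Finset.card_univ, Fintype.card_fin,
      nsmul_eq_mul] at hnx
    refine le_of_mul_le_mul_left ?_ (by positivity : (0 : ℤ) < n)
    rw [slack, deg] at h
    linarith
  refine ⟨fun i => d i - (n * x i - ∑ j, x j), fun i => ?_, x, fun i => by ring⟩
  have := Int.emod_nonneg (d i - c) (by positivity : (n : ℤ) ≠ 0)
  linarith [hx i]

lemma exists_slack_nonpos_of_lapEquiv {d d' : Fin n → ℤ} (hd' : ∀ i, 0 ≤ d' i)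
    (h : lapEquiv n d d') : ∃ c, slack n d c ≤ 0 := by
  have hdeg := deg_eq_of_lapEquiv h
  obtain ⟨x, hx⟩ := h
  refine ⟨-∑ j, x j, ?_⟩
  have hle : ∀ i, (d i - -∑ j, x j) % n ≤ d' i := fun i => by
    rw [show d i - -∑ j, x j = d' i + n * x i by linarith [hx i], Int.add_mul_emod_self_left]
    exact emod_le_self_of_nonneg n (hd' i)
  rw [slack, hdeg]
  exact sub_nonpos.2 (Finset.sum_le_sum fun i _ => hle i)

lemma mem_NKn_iff (hn : 0 < n) {d : Fin n → ℤ} : d ∈ NKn n ↔ ∀ c, 0 < slack n d c := by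
  refine ⟨fun hd c => ?_, fun h ⟨d', hd', hdd'⟩ => ?_⟩
  · by_contra! hc
    exact hd (exists_effective_lapEquiv hn hc)
  · obtain ⟨c, hc⟩ := exists_slack_nonpos_of_lapEquiv hd' hdd'
    exact (h c).not_ge hc

lemma slack_anti {p q : Fin n → ℤ} (hn : 0 < n) (hqp : q ≤ p) (c : ℤ) :
    slack n p c ≤ slack n q c := by
  simp only [slack_eq_sum]
  refine Finset.sum_le_sum fun i _ => ?_
  have := Int.ediv_le_ediv (by positivity : (0 : ℤ) < n) (sub_le_sub_right (hqp i) c)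
  have := mul_le_mul_of_nonneg_left this (by positivity : (0 : ℤ) ≤ n)
  linarith [Int.emod_def (p i - c) n, Int.emod_def (q i - c) n]

lemma slack_congr (d : Fin n → ℤ) {c c' : ℤ} (h : c ≡ c' [ZMOD n]) :
    slack n d c = slack n d c' := by
  simp only [slack]
  congr 1
  exact Finset.sum_congr rfl fun i _ => (Int.ModEq.sub_left (d i) h).eq

lemma slack_eq_of_modEq_comp {q r : Fin n → ℤ} (σ : Equiv.Perm (Fin n)) (hdeg : deg r = deg q)
    (hmod : ∀ k, r k ≡ q (σ k) [ZMOD n]) (c : ℤ) : slack n r c = slack n q c := by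
  simp only [slack, hdeg]
  congr 1
  rw [← Equiv.sum_comp σ (fun k => (q k - c) % (n : ℤ))]
  exact Finset.sum_congr rfl fun k _ => ((hmod k).sub_right c).eq

lemma slack_add_stdB (hn : 1 < n) (q : Fin n → ℤ) (i : Fin n) (c : ℤ) :
    slack n (q + stdB i) c = slack n q c - if c ≡ q i + 1 [ZMOD n] then (n : ℤ) else 0 := by
  classical
  simp only [slack_eq_sum, Fintype.sum_eq_add_sum_compl i]
  have hcompl : ∀ j ∈ ({i}ᶜ : Finset (Fin n)),
      ((q + stdB i) j - c) % (n : ℤ) - (q + stdB i) j = (q j - c) % (n : ℤ) - q j :=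
    fun j hj => by
      have : j ≠ i := by simpa using hj
      simp [stdB, this]
  have hi : (q + stdB i) i = q i + 1 := by simp [stdB]
  have := add_one_emod_sub_emod (by exact_mod_cast hn : (1 : ℤ) < n) (q i - c)
  rw [show q i - c + 1 = q i + 1 - c by ring] at this
  rw [Finset.sum_congr rfl hcompl, hi]
  by_cases h : c ≡ q i + 1 [ZMOD n]
  · rw [if_pos (Int.modEq_iff_dvd.1 h)] at this
    rw [if_pos h]
    linarith
  · rw [if_neg (mt Int.modEq_iff_dvd.2 h)] at this
    rw [if_neg h]
    linarith

lemma slack_add_one (hn : 1 < n) {q : Fin n → ℤ} {c : ℤ} (h : ∀ j, ¬ c ≡ q j [ZMOD n]) :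
    slack n q (c + 1) = slack n q c - n := by
  simp only [slack_eq_sum]
  have hj : ∀ j, (q j - (c + 1)) % (n : ℤ) - q j = ((q j - c) % (n : ℤ) - q j) - 1 :=
    fun j => by
      have := add_one_emod_sub_emod (by exact_mod_cast hn : (1 : ℤ) < n) (q j - (c + 1))
      rw [show q j - (c + 1) + 1 = q j - c by ring,
        if_neg (by rw [← Int.modEq_iff_dvd]; exact h j)] at this
      linarith
  simp only [hj, Finset.sum_sub_distrib, Finset.sum_const, Finset.card_univ, Fintype.card_fin,
    nsmul_eq_mul, mul_one]

lemma mem_NKn_of_modEq_comp (hn : 0 < n) {q r : Fin n → ℤ} (σ : Equiv.Perm (Fin n))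
    (hdeg : deg r = deg q) (hmod : ∀ k, r k ≡ q (σ k) [ZMOD n]) (hq : q ∈ NKn n) :
    r ∈ NKn n := by
  rw [mem_NKn_iff hn] at hq ⊢
  exact fun c => (slack_eq_of_modEq_comp σ hdeg hmod c).symm ▸ hq c

lemma comp_perm_mem_NKn (hn : 0 < n) {q : Fin n → ℤ} (σ : Equiv.Perm (Fin n))
    (hq : q ∈ NKn n) : q ∘ σ ∈ NKn n :=
  mem_NKn_of_modEq_comp hn σ (deg_comp_perm q σ) (fun _ => Int.ModEq.refl _) hq

lemma add_stdB_mem_NKn (hn : 1 < n) {q : Fin n → ℤ} {i : Fin n} (hq : q ∈ NKn n)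
    (h : n < slack n q (q i + 1)) : q + stdB i ∈ NKn n := by
  rw [mem_NKn_iff (by omega)] at hq ⊢
  intro c
  rw [slack_add_stdB hn]
  split_ifs with hc
  · rw [slack_congr q hc]; linarith
  · linarith [hq c]

lemma exists_modEq_of_slack_le (hn : 1 < n) {q : Fin n → ℤ} {c : ℤ} (hq : q ∈ NKn n)
    (h : slack n q c ≤ n) : ∃ j, c ≡ q j [ZMOD n] := by
  by_contra! hc
  rw [mem_NKn_iff (by omega)] at hq
  linarith [hq (c + 1), slack_add_one hn hc]

section distTo

variable {N : Set (Fin n → ℤ)}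

lemma distTo_le_of_mem_of_le {d p : Fin n → ℤ} (hp : p ∈ N) (hpd : p ≤ d) :
    (distTo N d : ℤ) ≤ deg d - deg p := by
  have hle : distTo N d ≤ ∑ i, (d i - p i).natAbs := Nat.sInf_le ⟨p, hp, rfl⟩
  have hsum : ((∑ i, (d i - p i).natAbs : ℕ) : ℤ) = deg d - deg p := by
    rw [← deg_sub, deg, Nat.cast_sum]
    exact Finset.sum_congr rfl fun i _ => Int.natAbs_of_nonneg (sub_nonneg.2 (hpd i))
  rw [← hsum]
  exact_mod_cast hle

lemma exists_mem_le_distTo_eq (hN : N.Nonempty) (hlow : IsLowerSet N) (d : Fin n → ℤ) :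
    ∃ p ∈ N, p ≤ d ∧ (distTo N d : ℤ) = deg d - deg p := by
  obtain ⟨p, hp, hpd⟩ :=
    Nat.sInf_mem (s := {k : ℕ | ∃ d' ∈ N, ∑ i, (d i - d' i).natAbs = k}) (hN.image _)
  -- clipping a nearest point at `d` stays in `N` and is no farther from `d`
  refine ⟨p ⊓ d, hlow inf_le_left hp, inf_le_right,
    (distTo_le_of_mem_of_le (hlow inf_le_left hp) inf_le_right).antisymm ?_⟩
  rw [distTo, ← hpd, ← deg_sub, deg, Nat.cast_sum]
  refine Finset.sum_le_sum fun i _ => ?_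
  simp only [Pi.sub_apply, Pi.inf_apply]
  omega

end distTo

lemma exists_mem_NKn_le_sub_stdB (hn : 0 < n) {a q : Fin n → ℤ} {i : Fin n} (ha : 0 ≤ a)
    (hai : a i = 0) (hq : q ∈ NKn n) (hqa : q ≤ a) :
    ∃ r ∈ NKn n, r ≤ a - stdB i ∧ deg r = deg q := by
  by_cases hqi : q i < 0
  · refine ⟨q, hq, fun k => ?_, rfl⟩
    by_cases hk : k = i
    · subst hk
      simp only [Pi.sub_apply, stdB]
      omega
    · simpa [stdB, hk] using hqa k
  obtain ⟨j, hj⟩ := exists_neg_of_mem_NKn hq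
  have hji : j ≠ i := by rintro rfl; exact hqi hj
  refine ⟨q ∘ Equiv.swap i j, comp_perm_mem_NKn hn _ hq, fun k => ?_, deg_comp_perm q _⟩
  rcases eq_or_ne k i with rfl | hki
  · simp only [Function.comp_apply, Equiv.swap_apply_left, Pi.sub_apply, stdB, hai]
    omega
  rcases eq_or_ne k j with rfl | hkj
  · simp only [Function.comp_apply, Equiv.swap_apply_right, Pi.sub_apply, stdB, if_neg hki,
      sub_zero]
    have : q i ≤ a i := hqa i
    have : 0 ≤ a k := ha k
    omega
  · simpa [Equiv.swap_apply_of_ne_of_ne hki hkj, stdB, hki] using hqa k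

/-- If raising `q i` is blocked at a residue `c ≡ q i + 1`, some `q j` has residue `c`, and moving
one unit from `j` to `i` permutes the residues; once `q i = b i`, raising is never blocked. -/
lemma exists_mem_NKn_le_add_stdB (hn : 1 < n) {b : Fin n → ℤ} {i : Fin n}
    (hb : n < slack n b (b i + 1)) (k : ℕ) :
    ∀ q ∈ NKn n, q ≤ b → q i = b i - k →
      ∃ r ∈ NKn n, r ≤ b + stdB i ∧ deg r = deg q + 1 := by
  have lift : ∀ q ∈ NKn n, q ≤ b → n < slack n q (q i + 1) →
      ∃ r ∈ NKn n, r ≤ b + stdB i ∧ deg r = deg q + 1 := fun q hq hqb h =>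
    ⟨q + stdB i, add_stdB_mem_NKn hn hq h, add_le_add_left hqb _, by rw [deg_add, deg_stdB]⟩
  induction k with
  | zero =>
    intro q hq hqb hqi
    refine lift q hq hqb ?_
    rw [hqi, Nat.cast_zero, sub_zero]
    exact hb.trans_le (slack_anti (by omega) hqb _)
  | succ k ih =>
    intro q hq hqb hqi
    by_cases h : n < slack n q (q i + 1)
    · exact lift q hq hqb h
    obtain ⟨j, hj⟩ := exists_modEq_of_slack_le hn hq (not_lt.1 h)
    have hji : j ≠ i := by
      rintro rfl
      have := Int.modEq_iff_dvd.1 hj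
      rw [show q j - (q j + 1) = -1 by ring, Int.dvd_neg] at this
      have := Int.le_of_dvd one_pos this
      omega
    set q' := q + stdB i - stdB j with hq'
    have hq'i : q' i = q i + 1 := by simp [hq', stdB, hji.symm]
    have hq'j : q' j = q j - 1 := by simp [hq', stdB, hji]
    have hq'k : ∀ k, k ≠ i → k ≠ j → q' k = q k := fun k hki hkj => by
      simp [hq', stdB, hki, hkj]
    have hdeg : deg q' = deg q := by rw [hq', deg_sub, deg_add, deg_stdB, deg_stdB]; ring
    have hmod : ∀ k, q' k ≡ q (Equiv.swap i j k) [ZMOD n] := fun k => by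
      rcases eq_or_ne k i with rfl | hki
      · rw [hq'i, Equiv.swap_apply_left]; exact hj
      rcases eq_or_ne k j with rfl | hkj
      · rw [hq'j, Equiv.swap_apply_right]; simpa using (hj.sub_right 1).symm
      · rw [hq'k k hki hkj, Equiv.swap_apply_of_ne_of_ne hki hkj]
    have hq'b : q' ≤ b := fun k => by
      rcases eq_or_ne k i with rfl | hki
      · rw [hq'i, hqi]; push_cast; linarith
      rcases eq_or_ne k j with rfl | hkj
      · rw [hq'j]; linarith [hqb k]
      · rw [hq'k k hki hkj]; exact hqb k
    obtain ⟨r, hr, hrb, hrdeg⟩ := ih q'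
      (mem_NKn_of_modEq_comp (by omega) (Equiv.swap i j) hdeg hmod hq) hq'b
      (by rw [hq'i, hqi]; push_cast; ring)
    exact ⟨r, hr, hrb, by rw [hrdeg, hdeg]⟩

lemma lt_slack_sub_stdB (hn : 1 < n) {a : Fin n → ℤ} {i j : Fin n} (hji : j ≠ i)
    (ha : ∀ k, a k < n) (hai : a i = 0) (haj : a j < 0) :
    (n : ℤ) < slack n (a - stdB i) ((a - stdB i) i + 1) := by
  classical
  set b := a - stdB i
  have hnz : (n : ℤ) ≠ 0 := by positivity
  have hbi : b i = -1 := by simp [b, stdB, hai]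
  have hbj : b j = a j := by simp [b, stdB, hji]
  have hterm : ∀ k, 0 ≤ b k % (n : ℤ) - b k := fun k => by
    rcases lt_or_ge (b k) 0 with h | h
    · linarith [Int.emod_nonneg (b k) hnz]
    · have : b k ≤ a k := by simpa [b] using stdB_nonneg i k
      rw [Int.emod_eq_of_lt h (this.trans_lt (ha k))]; simp
  have hrest : 0 < ∑ k ∈ {i}ᶜ, (b k % (n : ℤ) - b k) :=
    Finset.sum_pos' (fun k _ => hterm k)
      ⟨j, by simpa using hji, by linarith [Int.emod_nonneg (b j) hnz]⟩
  have hbi' : b i % (n : ℤ) - b i = n := by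
    have := add_one_emod_sub_emod (by exact_mod_cast hn : (1 : ℤ) < n) (-1)
    rw [hbi]
    rw [neg_add_cancel, if_pos (dvd_zero _), Int.zero_emod] at this
    linarith
  rw [slack_eq_sum, hbi, neg_add_cancel]
  simp only [sub_zero]
  rw [Fintype.sum_eq_add_sum_compl i]
  linarith

lemma distTo_add_stdB_le_succ (hn : 0 < n) (b : Fin n → ℤ) (i : Fin n) :
    distTo (NKn n) (b + stdB i) ≤ distTo (NKn n) b + 1 := by
  obtain ⟨p, hp, hpb, hdist⟩ := exists_mem_le_distTo_eq (NKn_nonempty hn) isLowerSet_NKn b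
  have := distTo_le_of_mem_of_le hp (hpb.trans (le_add_of_nonneg_right (stdB_nonneg i)))
  rw [deg_add, deg_stdB] at this
  omega

lemma distTo_sub_stdB_lt (hn : 0 < n) {a : Fin n → ℤ} {i : Fin n} (ha : 0 ≤ a)
    (hai : a i = 0) : distTo (NKn n) (a - stdB i) < distTo (NKn n) a := by
  obtain ⟨p, hp, hpa, hdist⟩ := exists_mem_le_distTo_eq (NKn_nonempty hn) isLowerSet_NKn a
  obtain ⟨r, hr, hra, hrdeg⟩ := exists_mem_NKn_le_sub_stdB hn ha hai hp hpa
  have := distTo_le_of_mem_of_le hr hra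
  rw [deg_sub, deg_stdB, hrdeg] at this
  omega

lemma distTo_add_stdB_le (hn : 1 < n) {b : Fin n → ℤ} {i : Fin n}
    (hb : n < slack n b (b i + 1)) : distTo (NKn n) (b + stdB i) ≤ distTo (NKn n) b := by
  obtain ⟨p, hp, hpb, hdist⟩ :=
    exists_mem_le_distTo_eq (NKn_nonempty (by omega)) isLowerSet_NKn b
  have hpbi : p i ≤ b i := hpb i
  obtain ⟨r, hr, hrb, hrdeg⟩ :=
    exists_mem_NKn_le_add_stdB hn hb (b i - p i).toNat p hp hpb (by omega)
  have := distTo_le_of_mem_of_le hr hrb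
  rw [deg_add, deg_stdB, hrdeg] at this
  omega

lemma sum_filter_le_deg_iff (hn : 2 ≤ n) {a : Fin n → ℤ} {i₂ i₁ : Fin n}
    (h₂ : (i₂ : ℕ) = n - 2) (h₁ : (i₁ : ℕ) = n - 1) (ha : a i₂ = 0) :
    ∑ j ∈ Finset.univ.filter (fun j : Fin n => (j : ℕ) < n - 2), a j ≤ deg a ↔ 0 ≤ a i₁ := by
  have hcompl : Finset.univ.filter (fun j : Fin n => ¬ (j : ℕ) < n - 2) = {i₂, i₁} := by
    ext k
    simp only [Finset.mem_filter, Finset.mem_univ, true_and, Finset.mem_insert,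
      Finset.mem_singleton, Fin.ext_iff]
    omega
  have hsplit := Finset.sum_filter_add_sum_filter_not Finset.univ
    (fun j : Fin n => (j : ℕ) < n - 2) a
  rw [hcompl, Finset.sum_pair (by rw [ne_eq, Fin.ext_iff]; omega), ha, zero_add] at hsplit
  rw [deg, ← hsplit, le_add_iff_nonneg_right]

end BakerNorine

open BakerNorine in
theorem stmt18 {n : ℕ} (hn : 2 ≤ n) (a : Fin n → ℤ)
    (hA1 : ∀ j : Fin n, (j : ℕ) < n - 2 → 0 ≤ a j ∧ a j ≤ (n : ℤ) - 1)
    (hA2 : a ⟨n - 2, by omega⟩ = 0) :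
    (∑ j ∈ Finset.univ.filter (fun j : Fin n => (j : ℕ) < n - 2), a j) ≤ deg a ↔
      rBN n a = rBN n (a - stdB ⟨n - 2, by omega⟩) + 1 := by
  set i₂ : Fin n := ⟨n - 2, by omega⟩
  set i₁ : Fin n := ⟨n - 1, by omega⟩
  rw [sum_filter_le_deg_iff hn (i₁ := i₁) rfl rfl hA2]
  have hcases : ∀ k : Fin n, (k : ℕ) < n - 2 ∨ k = i₂ ∨ k = i₁ := fun k => by
    simp only [i₁, i₂, Fin.ext_iff]; omega
  have hi : i₁ ≠ i₂ := by simp only [i₁, i₂, ne_eq, Fin.ext_iff]; omega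
  have hab : a - stdB i₂ + stdB i₂ = a := sub_add_cancel a _
  have hle := distTo_add_stdB_le_succ (by omega) (a - stdB i₂) i₂
  rw [hab] at hle
  simp only [rBN]
  constructor
  · intro h
    have ha : 0 ≤ a := fun k => by
      rcases hcases k with hk | rfl | rfl
      exacts [(hA1 k hk).1, hA2.ge, h]
    have := distTo_sub_stdB_lt (by omega) ha hA2
    omega
  · intro h
    by_contra! hneg
    have ha : ∀ k, a k < n := fun k => by
      rcases hcases k with hk | rfl | rfl
      exacts [by linarith [(hA1 k hk).2], by linarith, by linarith]
    have := distTo_add_stdB_le (by omega) (lt_slack_sub_stdB (by omega) hi ha hA2 hneg)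
    rw [hab] at this
    omega
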